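/- Let x = ξ_1/2 + ξ_2/2² + ... + ξ_m/2^m be an m-bit dyadic rational in [0,1) with digits ξ_l ∈ {0,1}. Then for each j ∈ {0,...,m-1}, 2^{-j} · Σ_{k=2^j}^{2^{j+1}-1} wal_k(x) equals (-1)^{ξ_{j+1}} if ξ_1 = ξ_2 = ... = ξ_j = 0, and equals 0 otherwise. -/

import Mathlib

/-- the `i`-th dyadic digit `ξ_i` of `x ∈ [0,1)` (for `i ≥ 1`). -/
noncomputable def dyadicDigit (x : ℝ) (i : ℕ) : ℕ := (Int.toNat ⌊x * 2 ^ i⌋) % 2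

/-- the `k`-th dyadic Walsh function. -/
noncomputable def walsh (k : ℕ) (x : ℝ) : ℝ :=
  (-1) ^ (∑ i ∈ Finset.range (Nat.size k), if Nat.testBit k i then dyadicDigit x (i + 1) else 0)

/-!
For `k < 2 ^ n` the Walsh function is a product over the bits of `k`:
`wal_k(x) = ∏_{i<n} r_i(x) ^ κ_i` with `r_i(x) = (-1) ^ ξ_{i+1}`. Summing over all `k < 2 ^ n`
therefore factors as `∏_{i<n} (1 + r_i(x))`, and the block `2 ^ j ≤ k < 2 ^ (j+1)` is the
difference of two such sums, `r_j(x) · ∏_{i<j} (1 + r_i(x))`. Each factor `1 + (-1) ^ ξ_{i+1}`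
is `2` or `0`. The digits of a finite expansion are read off from the integer `x · 2 ^ m`.
-/

open Finset

/-- The integer with binary digits `ξ 1, …, ξ i`, most significant first, so that
`0.ξ₁…ξᵢ = dyadicNumerator ξ i / 2 ^ i`. -/
def dyadicNumerator (ξ : ℕ → ℕ) : ℕ → ℕ
  | 0 => 0
  | i + 1 => 2 * dyadicNumerator ξ i + ξ (i + 1)

theorem sum_div_two_pow_eq_dyadicNumerator_div (ξ : ℕ → ℕ) (m : ℕ) :
    ∑ l ∈ range m, (ξ (l + 1) : ℝ) / 2 ^ (l + 1) = dyadicNumerator ξ m / 2 ^ m := by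
  induction m with
  | zero => simp [dyadicNumerator]
  | succ m ih =>
    rw [sum_range_succ, ih, dyadicNumerator]
    push_cast
    field_simp
    ring

theorem dyadicNumerator_div_two_pow {ξ : ℕ → ℕ} (hξ : ∀ l, ξ l ≤ 1) {i m : ℕ}
    (h : i ≤ m) :
    dyadicNumerator ξ m / 2 ^ (m - i) = dyadicNumerator ξ i := by
  induction m, h using Nat.le_induction with
  | base => simp
  | succ m hm ih =>
    have hdrop : dyadicNumerator ξ (m + 1) / 2 = dyadicNumerator ξ m := by
      have := hξ (m + 1)
      rw [dyadicNumerator]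
      omega
    rw [Nat.sub_add_comm hm, pow_succ', ← Nat.div_div_eq_div_mul, hdrop, ih]

theorem dyadicNumerator_mod_two {ξ : ℕ → ℕ} (hξ : ∀ l, ξ l ≤ 1) (i : ℕ) :
    dyadicNumerator ξ (i + 1) % 2 = ξ (i + 1) := by
  have := hξ (i + 1)
  rw [dyadicNumerator]
  omega

theorem dyadicDigit_natCast_div_two_pow (N : ℕ) {i m : ℕ} (h : i ≤ m) :
    dyadicDigit ((N : ℝ) / 2 ^ m) i = N / 2 ^ (m - i) % 2 := by
  have hscale : (N : ℝ) / 2 ^ m * 2 ^ i = (N : ℝ) / ((2 ^ (m - i) : ℕ) : ℝ) := by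
    rw [← Nat.sub_add_cancel h, pow_add]
    push_cast
    field_simp
    simp
  rw [dyadicDigit, hscale, Int.floor_div_natCast, Int.floor_natCast]
  norm_cast

theorem dyadicDigit_sum_div_two_pow {ξ : ℕ → ℕ} (hξ : ∀ l, ξ l ≤ 1) {i m : ℕ}
    (hi : 1 ≤ i) (him : i ≤ m) :
    dyadicDigit (∑ l ∈ range m, (ξ (l + 1) : ℝ) / 2 ^ (l + 1)) i = ξ i := by
  obtain ⟨i, rfl⟩ := Nat.exists_eq_add_of_le' hi
  rw [sum_div_two_pow_eq_dyadicNumerator_div, dyadicDigit_natCast_div_two_pow _ him,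
    dyadicNumerator_div_two_pow hξ him, dyadicNumerator_mod_two hξ]

theorem sum_range_two_pow_prod_testBit {R : Type*} [CommSemiring R] (f : ℕ → Bool → R)
    (n : ℕ) :
    ∑ k ∈ range (2 ^ n), ∏ i ∈ range n, f i (k.testBit i) =
      ∏ i ∈ range n, (f i false + f i true) := by
  induction n with
  | zero => simp
  | succ n ih =>
    have hlow : ∀ k ∈ range (2 ^ n),
        ∏ i ∈ range (n + 1), f i (k.testBit i) =
          (∏ i ∈ range n, f i (k.testBit i)) * f n false := by
      intro k hk
      rw [prod_range_succ, Nat.testBit_lt_two_pow (mem_range.mp hk)]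
    have hhigh : ∀ k ∈ range (2 ^ n), ∏ i ∈ range (n + 1), f i ((2 ^ n + k).testBit i) =
        (∏ i ∈ range n, f i (k.testBit i)) * f n true := by
      intro k hk
      rw [prod_range_succ, Nat.testBit_two_pow_add_eq, Nat.testBit_lt_two_pow (mem_range.mp hk)]
      congr 1
      exact prod_congr rfl fun i hi => by rw [Nat.testBit_two_pow_add_gt (mem_range.mp hi)]
    rw [pow_succ, mul_two, sum_range_add, sum_congr rfl hlow, sum_congr rfl hhigh, ← sum_mul,
      ← sum_mul, ih, prod_range_succ, mul_add]

theorem walsh_eq_prod_of_lt_two_pow (x : ℝ) {k n : ℕ} (hk : k < 2 ^ n) :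
    walsh k x = ∏ i ∈ range n, (-1) ^ (if k.testBit i then dyadicDigit x (i + 1) else 0) := by
  rw [prod_pow_eq_pow_sum, walsh]
  congr 1
  refine sum_subset (range_subset_range.mpr (Nat.size_le.mpr hk)) fun i _ hi => ?_
  have hsize : k.size ≤ i := not_lt.mp (mem_range.not.mp hi)
  rw [Nat.testBit_lt_two_pow ((Nat.lt_size_self k).trans_le (Nat.pow_le_pow_right two_pos hsize)),
    if_neg Bool.false_ne_true]

theorem sum_range_two_pow_walsh (x : ℝ) (n : ℕ) :
    ∑ k ∈ range (2 ^ n), walsh k x = ∏ i ∈ range n, (1 + (-1) ^ dyadicDigit x (i + 1)) := by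
  rw [sum_congr rfl fun k hk => walsh_eq_prod_of_lt_two_pow x (mem_range.mp hk)]
  convert sum_range_two_pow_prod_testBit
    (fun i b => (-1 : ℝ) ^ (if b then dyadicDigit x (i + 1) else 0)) n using 3 <;> simp

theorem sum_Ico_two_pow_walsh (x : ℝ) (n : ℕ) :
    ∑ k ∈ Ico (2 ^ n) (2 ^ (n + 1)), walsh k x =
      (∏ i ∈ range n, (1 + (-1) ^ dyadicDigit x (i + 1))) * (-1) ^ dyadicDigit x (n + 1) := by
  have h := sum_range_add_sum_Ico (fun k => walsh k x) (Nat.pow_le_pow_right two_pos n.le_succ)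
  rw [sum_range_two_pow_walsh, sum_range_two_pow_walsh, prod_range_succ, mul_one_add] at h
  exact add_left_cancel h

theorem prod_range_one_add_neg_one_pow {ξ : ℕ → ℕ} (hξ : ∀ l, ξ l ≤ 1) (n : ℕ) :
    ∏ i ∈ range n, (1 + (-1 : ℝ) ^ ξ (i + 1)) =
      if ∀ l, 1 ≤ l → l ≤ n → ξ l = 0 then 2 ^ n else 0 := by
  have hfactor : ∀ i, 1 + (-1 : ℝ) ^ ξ (i + 1) = if ξ (i + 1) = 0 then 2 else 0 := by
    intro i
    rcases Nat.le_one_iff_eq_zero_or_eq_one.mp (hξ (i + 1)) with h | h <;> norm_num [h]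
  have hcond : (∀ i ∈ range n, ξ (i + 1) = 0) ↔ ∀ l, 1 ≤ l → l ≤ n → ξ l = 0 := by
    refine ⟨fun h l hl hln => ?_, fun h i hi => h (i + 1) i.succ_pos (mem_range.mp hi)⟩
    obtain ⟨i, rfl⟩ := Nat.exists_eq_add_of_le' hl
    exact h i (mem_range.mpr hln)
  simp only [hfactor, prod_ite_zero, hcond, prod_const, card_range]

theorem sum_walsh_block_general (m : ℕ) (ξ : ℕ → ℕ) (hξ : ∀ l, ξ l ≤ 1) (x : ℝ)
    (hx : x = ∑ l ∈ Finset.range m, (ξ (l + 1) : ℝ) / 2 ^ (l + 1))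
    (j : ℕ) (hj : j < m) :
    (1 / 2 ^ j : ℝ) * ∑ k ∈ Finset.Icc (2 ^ j) (2 ^ (j + 1) - 1), walsh k x =
      if ∀ l, 1 ≤ l → l ≤ j → ξ l = 0 then (-1 : ℝ) ^ (ξ (j + 1)) else 0 := by
  have hblock : Icc (2 ^ j) (2 ^ (j + 1) - 1) = Ico (2 ^ j) (2 ^ (j + 1)) := by
    ext k
    simp only [mem_Icc, mem_Ico]
    have := Nat.one_le_two_pow (n := j + 1)
    omega
  have hdigit : ∀ i, i ≤ j → dyadicDigit x (i + 1) = ξ (i + 1) := fun i hi => by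
    rw [hx]
    exact dyadicDigit_sum_div_two_pow hξ i.succ_pos (by omega)
  rw [hblock, sum_Ico_two_pow_walsh, hdigit j le_rfl,
    prod_congr rfl fun i hi => by rw [hdigit i (mem_range.mp hi).le],
    prod_range_one_add_neg_one_pow hξ]
  split_ifs
  · field_simp
  · simp

theorem sum_walsh_block (m : ℕ) (hm : 1 ≤ m) (ξ : ℕ → ℕ) (hξ : ∀ l, ξ l ≤ 1) (x : ℝ)
    (hx : x = ∑ l ∈ Finset.range m, (ξ (l + 1) : ℝ) / 2 ^ (l + 1))
    (j : ℕ) (hj : j < m) :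
    (1 / 2 ^ j : ℝ) * ∑ k ∈ Finset.Icc (2 ^ j) (2 ^ (j + 1) - 1), walsh k x =
      if ∀ l, 1 ≤ l → l ≤ j → ξ l = 0 then (-1 : ℝ) ^ (ξ (j + 1)) else 0 :=
  sum_walsh_block_general m ξ hξ x hx j hj
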